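/- Let x : ℕ → ℝ be a real sequence (indexed from 1). The series Σ_{i=1}^∞ x_i fails to converge to a finite limit if and only if for every nonnegative sequence (c_j)_{j≥1} with c_j → 0 there exists a sequence of block sizes n : ℕ → ℕ with n_j ≥ 1 for all j such that the posterior means m_k = (Σ_{j=1}^k 1/j² + Σ_{j=1}^k y_j)/(k + 2 Σ_{j=1}^k 1/j²) converge to 0 as k → ∞, where y_j = 1 if |S_j| ≤ c_j and y_j = 0 otherwise, and S_j is the j-th block sum determined by the block sizes n. -/

import Mathlib

/-!
If the series diverges, its partial sums are not Cauchy: there is `ε > 0` such that from every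
index one can jump to a later one with a partial-sum increment of size at least `ε`. Choosing the
block ends along such jumps makes every block sum at least `ε` in absolute value, so eventually
`|S_j| > c_j`, the indicators `y_j` vanish, and their running average and hence the posterior mean
tend to `0`.

If the series converges, its partial sums have a Cauchy modulus `b_N → 0` (every two partial sums
beyond `N` are `b_N`-close). Since `N_{j-1} ≥ j - 1`, the choice `c_j = b_{j-1}` forces `y_j = 1`
for every choice of blocks, so the posterior mean tends to `1`.

In both cases the posterior mean differs from the running average of the `y_j` by at most
`(∑ 1/j²)/k`.
-/

open Filter Finset

/-- Cumulative block endpoints: `N n j = n 1 + ⋯ + n j`, with `N n 0 = 0`. -/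
noncomputable def blockEnd (n : ℕ → ℕ) (j : ℕ) : ℕ := ∑ k ∈ Finset.Icc 1 j, n k

/-- The `j`-th block sum `S j = ∑_{i = N_{j-1}+1}^{N_j} x i`. -/
noncomputable def blockSum (x : ℕ → ℝ) (n : ℕ → ℕ) (j : ℕ) : ℝ :=
  ∑ i ∈ Finset.Ioc (blockEnd n (j - 1)) (blockEnd n j), x i

/-- `y j = 1` if `|S j| ≤ c j` and `y j = 0` otherwise. -/
noncomputable def indicatorY (x : ℕ → ℝ) (n : ℕ → ℕ) (c : ℕ → ℝ) (j : ℕ) : ℝ :=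
  if |blockSum x n j| ≤ c j then 1 else 0

/-- Stage-`k` posterior mean
`m k = (∑_{j=1}^k 1/j² + ∑_{j=1}^k y j) / (k + 2 ∑_{j=1}^k 1/j²)`. -/
noncomputable def postMean (x : ℕ → ℝ) (n : ℕ → ℕ) (c : ℕ → ℝ) (k : ℕ) : ℝ :=
  (∑ j ∈ Finset.Icc 1 k, (1 : ℝ) / (j : ℝ) ^ 2 + ∑ j ∈ Finset.Icc 1 k, indicatorY x n c j) /
    ((k : ℝ) + 2 * ∑ j ∈ Finset.Icc 1 k, (1 : ℝ) / (j : ℝ) ^ 2)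

open Topology

lemma tendsto_sum_Icc_div_of_tendsto {u : ℕ → ℝ} {l : ℝ} (h : Tendsto u atTop (𝓝 l)) :
    Tendsto (fun k : ℕ => (∑ j ∈ Icc 1 k, u j) / k) atTop (𝓝 l) := by
  have hshift : ∀ k, ∑ i ∈ range k, u (i + 1) = ∑ j ∈ Icc 1 k, u j := fun k => by
    rw [range_eq_Ico, sum_Ico_add' u 0 k 1, zero_add, ← Ico_add_one_right_eq_Icc]
  simpa [hshift, inv_mul_eq_div] using (h.comp (tendsto_add_atTop_nat 1)).cesaro

lemma abs_add_div_add_sub_div_le {a y k : ℝ} (ha : 0 ≤ a) (hy : 0 ≤ y) (hyk : y ≤ k)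
    (hk : 0 < k) : |(a + y) / (k + 2 * a) - y / k| ≤ a / k := by
  have hka : 0 < k + 2 * a := by linarith
  rw [div_sub_div _ _ hka.ne' hk.ne', abs_div, abs_of_pos (mul_pos hka hk),
    div_le_div_iff₀ (mul_pos hka hk) hk,
    show (a + y) * k - (k + 2 * a) * y = a * (k - 2 * y) by ring, abs_mul, abs_of_nonneg ha]
  have : |k - 2 * y| ≤ k := abs_le.2 ⟨by linarith, by linarith⟩
  calc a * |k - 2 * y| * k ≤ a * k * k := by gcongr
    _ ≤ a * ((k + 2 * a) * k) := by nlinarith [mul_nonneg (mul_nonneg ha ha) hk.le]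

noncomputable def partialSum (x : ℕ → ℝ) (m : ℕ) : ℝ := ∑ i ∈ Icc 1 m, x i

lemma sum_Ioc_eq_partialSum_sub (x : ℕ → ℝ) {a b : ℕ} (hab : a ≤ b) :
    ∑ i ∈ Ioc a b, x i = partialSum x b - partialSum x a := by
  have hIoc : ∀ m, partialSum x m = ∑ i ∈ Ioc 0 m, x i := fun m => by
    rw [partialSum, ← Icc_add_one_left_eq_Ioc, zero_add]
  rw [hIoc, hIoc, ← sum_Ioc_consecutive x (Nat.zero_le a) hab, add_sub_cancel_left]

lemma blockEnd_mono (n : ℕ → ℕ) : Monotone (blockEnd n) := fun _ _ h =>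
  sum_le_sum_of_subset (Icc_subset_Icc_right h)

lemma blockSum_eq_partialSum_sub (x : ℕ → ℝ) (n : ℕ → ℕ) (j : ℕ) :
    blockSum x n j = partialSum x (blockEnd n j) - partialSum x (blockEnd n (j - 1)) :=
  sum_Ioc_eq_partialSum_sub x (blockEnd_mono n (Nat.sub_le j 1))

lemma le_blockEnd {n : ℕ → ℕ} (hn : ∀ j, 1 ≤ n j) (j : ℕ) : j ≤ blockEnd n j := by
  simpa [blockEnd] using card_nsmul_le_sum (Icc 1 j) n 1 fun i _ => hn i

lemma exists_blockEnd_eq {N : ℕ → ℕ} (hN : StrictMono N) (h0 : N 0 = 0) :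
    ∃ n : ℕ → ℕ, (∀ j, 1 ≤ n j) ∧ ∀ j, blockEnd n j = N j := by
  refine ⟨fun j => if j = 0 then 1 else N j - N (j - 1), fun j => ?_, fun j => ?_⟩
  · dsimp only
    split_ifs with hj
    · rfl
    · have := hN (Nat.sub_lt (Nat.pos_of_ne_zero hj) one_pos)
      omega
  · induction j with
    | zero => simp [blockEnd, h0]
    | succ j ih =>
      rw [blockEnd, sum_Icc_succ_top (Nat.le_add_left 1 j), ← blockEnd, ih]
      have := hN (Nat.lt_add_one j)
      simp only [Nat.add_one_ne_zero, if_false, Nat.add_sub_cancel]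
      omega

lemma exists_blocks_le_abs_blockSum {x : ℕ → ℝ} (hx : ¬ CauchySeq (partialSum x)) :
    ∃ ε > 0, ∃ n : ℕ → ℕ, (∀ j, 1 ≤ n j) ∧ ∀ j, 1 ≤ j → ε ≤ |blockSum x n j| := by
  obtain ⟨ε, hε, hjump⟩ :
      ∃ ε > 0, ∀ P, ∃ q ≥ P, ε ≤ dist (partialSum x q) (partialSum x P) := by
    simpa [Metric.cauchySeq_iff'] using hx
  choose next hnext_ge hnext using hjump
  have hnext_gt : ∀ P, P < next P := fun P =>
    (hnext_ge P).lt_of_ne fun h => by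
      have := hnext P
      rw [← h, dist_self] at this
      linarith
  obtain ⟨n, hn, hN⟩ := exists_blockEnd_eq (N := fun j => next^[j] 0)
    (strictMono_nat_of_lt_succ fun j => by
      simpa only [Function.iterate_succ_apply'] using hnext_gt _) rfl
  refine ⟨ε, hε, n, hn, fun j hj => ?_⟩
  obtain ⟨i, rfl⟩ := Nat.exists_eq_add_of_le' hj
  rw [blockSum_eq_partialSum_sub, hN, hN, Nat.add_sub_cancel, Function.iterate_succ_apply',
    ← Real.dist_eq]
  exact hnext _

lemma indicatorY_eq_one_of_dist_le {x : ℕ → ℝ} {b : ℕ → ℝ}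
    (hb : ∀ m m' N : ℕ, N ≤ m → N ≤ m' → dist (partialSum x m) (partialSum x m') ≤ b N)
    {n : ℕ → ℕ} (hn : ∀ j, 1 ≤ n j) (j : ℕ) : indicatorY x n (fun j => b (j - 1)) j = 1 := by
  refine if_pos ?_
  rw [blockSum_eq_partialSum_sub, ← Real.dist_eq]
  exact hb _ _ _ ((Nat.sub_le j 1).trans (le_blockEnd hn j)) (le_blockEnd hn (j - 1))

section Posterior

variable (x : ℕ → ℝ) (n : ℕ → ℕ) (c : ℕ → ℝ)

noncomputable def smallBlockFreq (k : ℕ) : ℝ := (∑ j ∈ Icc 1 k, indicatorY x n c j) / k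

lemma indicatorY_nonneg (j : ℕ) : 0 ≤ indicatorY x n c j := by
  unfold indicatorY; split_ifs <;> norm_num

lemma indicatorY_le_one (j : ℕ) : indicatorY x n c j ≤ 1 := by
  unfold indicatorY; split_ifs <;> norm_num

lemma sum_indicatorY_le (k : ℕ) : ∑ j ∈ Icc 1 k, indicatorY x n c j ≤ k := by
  calc ∑ j ∈ Icc 1 k, indicatorY x n c j ≤ ∑ _j ∈ Icc 1 k, (1 : ℝ) :=
        sum_le_sum fun j _ => indicatorY_le_one x n c j
    _ = k := by simp

lemma tendsto_postMean_sub_smallBlockFreq :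
    Tendsto (fun k => postMean x n c k - smallBlockFreq x n c k) atTop (𝓝 0) := by
  refine squeeze_zero_norm' ?_ (tendsto_const_div_atTop_nhds_zero_nat (∑' j : ℕ, 1 / (j : ℝ) ^ 2))
  filter_upwards [eventually_ge_atTop 1] with k hk
  have hA0 : 0 ≤ ∑ j ∈ Icc 1 k, (1 : ℝ) / (j : ℝ) ^ 2 := sum_nonneg fun j _ => by positivity
  have hA : ∑ j ∈ Icc 1 k, (1 : ℝ) / (j : ℝ) ^ 2 ≤ ∑' j : ℕ, 1 / (j : ℝ) ^ 2 :=
    (Real.summable_one_div_nat_pow.2 one_lt_two).sum_le_tsum _ fun j _ => by positivity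
  calc ‖postMean x n c k - smallBlockFreq x n c k‖
      ≤ (∑ j ∈ Icc 1 k, (1 : ℝ) / (j : ℝ) ^ 2) / k :=
        abs_add_div_add_sub_div_le hA0 (sum_nonneg fun j _ => indicatorY_nonneg x n c j)
          (sum_indicatorY_le x n c k) (by exact_mod_cast hk)
    _ ≤ (∑' j : ℕ, 1 / (j : ℝ) ^ 2) / k := by gcongr

lemma tendsto_postMean_of_tendsto_smallBlockFreq {l : ℝ}
    (h : Tendsto (smallBlockFreq x n c) atTop (𝓝 l)) :
    Tendsto (postMean x n c) atTop (𝓝 l) := by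
  simpa using (tendsto_postMean_sub_smallBlockFreq x n c).add h

end Posterior

/-- Bayesian characterization of divergence (Theorem 2, path-wise content):
the series `∑_{i=1}^∞ x i` fails to converge to a finite limit iff for every
nonnegative sequence `c j → 0` there is a choice of block sizes `n j ≥ 1` such
that the posterior means tend to `0`. -/
theorem bayesian_characterization_of_divergence (x : ℕ → ℝ) :
    (¬ ∃ L : ℝ, Tendsto (fun m => ∑ i ∈ Finset.Icc 1 m, x i) atTop (nhds L)) ↔
      ∀ c : ℕ → ℝ, (∀ j, 0 ≤ c j) → Tendsto c atTop (nhds 0) →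
        ∃ n : ℕ → ℕ, (∀ j, 1 ≤ n j) ∧
          Tendsto (fun k => postMean x n c k) atTop (nhds 0) := by
  have hconv : (∃ L, Tendsto (partialSum x) atTop (𝓝 L)) ↔ CauchySeq (partialSum x) :=
    ⟨fun ⟨_, hL⟩ => hL.cauchySeq, cauchySeq_tendsto_of_complete⟩
  refine hconv.not.trans ⟨fun hx c _ hc => ?_, fun h hx => ?_⟩
  · obtain ⟨ε, hε, n, hn, hS⟩ := exists_blocks_le_abs_blockSum hx
    have hy : ∀ᶠ j in atTop, indicatorY x n c j = 0 := by
      filter_upwards [eventually_ge_atTop 1, hc.eventually (gt_mem_nhds hε)] with j hj hcj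
      exact if_neg (by linarith [hS j hj])
    exact ⟨n, hn, tendsto_postMean_of_tendsto_smallBlockFreq x n c
      (tendsto_sum_Icc_div_of_tendsto (tendsto_const_nhds.congr' (hy.mono fun _ h => h.symm)))⟩
  · obtain ⟨b, hb0, hb, hb_lim⟩ := cauchySeq_iff_le_tendsto_0.1 hx
    obtain ⟨n, hn, hmean⟩ :=
      h (fun j => b (j - 1)) (fun j => hb0 _) (hb_lim.comp (tendsto_sub_atTop_nat 1))
    have hfreq : Tendsto (smallBlockFreq x n fun j => b (j - 1)) atTop (𝓝 1) :=
      tendsto_sum_Icc_div_of_tendsto <|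
        tendsto_const_nhds.congr fun j => (indicatorY_eq_one_of_dist_le hb hn j).symm
    exact one_ne_zero (tendsto_nhds_unique (tendsto_postMean_of_tendsto_smallBlockFreq _ _ _ hfreq)
      hmean)
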